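/- arXiv:2007.10673 — 2 statements merged into one kernel-verified Lean document; each statement's English description precedes it below -/
import Mathlib

section
/- Let k ≥ 1 and let P_1,…,P_m ∈ ℝ_{≥0}^{n×n'} be nonnegative matrices with PSD-rank prank(P_i) ≤ k for each i, and let P = (1/m)·diag(P_1,…,P_m) ∈ ℝ_{≥0}^{mn×mn'} be the corresponding block diagonal nonnegative matrix. Then rank_psd^{(k)}(P) ≤ m; moreover, if in addition prank(P) ≥ k·m, then rank_psd^{(k)}(P) = m. -/
open Matrix BigOperators Kronecker
open scoped ComplexOrder

/-- `P` admits a PSD factorization of size `r`: there are `r × r` complex positive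
semidefinite matrices `C i` (one per row index) and `D j` (one per column index) with
`P i j = tr (C i * D j)`. -/
def HasPsdFac {α β : Type} [Fintype α] [Fintype β] (P : Matrix α β ℝ) (r : ℕ) : Prop :=
  ∃ (C : α → Matrix (Fin r) (Fin r) ℂ) (D : β → Matrix (Fin r) (Fin r) ℂ),
    (∀ i, (C i).PosSemidef) ∧ (∀ j, (D j).PosSemidef) ∧
      ∀ i j, (P i j : ℂ) = ((C i) * (D j)).trace

/-- The PSD-rank of a nonnegative matrix: the least size of a PSD factorization. -/
noncomputable def prank {α β : Type} [Fintype α] [Fintype β] (P : Matrix α β ℝ) : ℕ :=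
  sInf {r | HasPsdFac P r}

/-- `P` admits a `k`-block PSD factorization of size `r`: there are `k × k` complex
positive semidefinite matrices `C i l`, `D j l` (`l ∈ [r]`) with
`P i j = ∑ l, tr (C i l * D j l)`. -/
def HasBlockPsdFac {α β : Type} [Fintype α] [Fintype β] (k : ℕ)
    (P : Matrix α β ℝ) (r : ℕ) : Prop :=
  ∃ (C : α → Fin r → Matrix (Fin k) (Fin k) ℂ)
    (D : β → Fin r → Matrix (Fin k) (Fin k) ℂ),
    (∀ i l, (C i l).PosSemidef) ∧ (∀ j l, (D j l).PosSemidef) ∧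
      ∀ i j, (P i j : ℂ) = ∑ l, ((C i l) * (D j l)).trace

/-- The `k`-block PSD rank of a nonnegative matrix:
the least size of a `k`-block PSD factorization. -/
noncomputable def kprank {α β : Type} [Fintype α] [Fintype β] (k : ℕ)
    (P : Matrix α β ℝ) : ℕ :=
  sInf {r | HasBlockPsdFac k P r}

/-- The nonnegative rank of a nonnegative matrix: the least `r` such that `P` is a sum
of `r` nonnegative rank-one matrices (outer products of nonnegative vectors). -/
noncomputable def nnRank {α β : Type} [Fintype α] [Fintype β] (P : Matrix α β ℝ) : ℕ :=
  sInf {r | ∃ (u : Fin r → α → ℝ) (v : Fin r → β → ℝ),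
    (∀ l i, 0 ≤ u l i) ∧ (∀ l j, 0 ≤ v l j) ∧ ∀ i j, P i j = ∑ l, u l i * v l j}

/-
The `m` blocks of `P` have pairwise disjoint supports, so `k × k` PSD factorizations of the
scaled blocks `(1/m) • Q a`, placed in the `a`-th slot and padded with zero matrices elsewhere,
form a `k`-block PSD factorization of `P` of size `m`. Conversely, a `k`-block factorization of
size `r` assembles, block-diagonally, into an ordinary PSD factorization of size `k * r`, so
`prank P ≤ k * kprank k P`, which together with `k * m ≤ prank P` forces `kprank k P ≥ m`.
-/

lemma Matrix.trace_mul_conj_of_conjTranspose_mul_self_eq_one {ι κ R : Type*} [Fintype ι]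
    [Fintype κ] [DecidableEq κ] [CommSemiring R] [Star R] {E : Matrix ι κ R} (hE : Eᴴ * E = 1)
    (A B : Matrix κ κ R) :
    ((E * A * Eᴴ) * (E * B * Eᴴ)).trace = (A * B).trace := by
  calc ((E * A * Eᴴ) * (E * B * Eᴴ)).trace = (E * (A * (Eᴴ * E) * B) * Eᴴ).trace := by
        simp only [Matrix.mul_assoc]
    _ = (Eᴴ * E * (A * (Eᴴ * E) * B)).trace := by
        rw [Matrix.trace_mul_comm, ← Matrix.mul_assoc]
    _ = (A * B).trace := by rw [hE, Matrix.one_mul, Matrix.mul_one]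

lemma Matrix.trace_submatrix_equiv {ι κ R : Type*} [Fintype ι] [Fintype κ] [AddCommMonoid R]
    (e : ι ≃ κ) (A : Matrix κ κ R) : (A.submatrix e e).trace = A.trace :=
  Fintype.sum_equiv e _ _ fun _ => rfl

lemma Matrix.PosSemidef.blockDiagonal {ι κ : Type} [Fintype ι] [DecidableEq ι] [Fintype κ]
    [DecidableEq κ] {M : ι → Matrix κ κ ℂ} (hM : ∀ l, (M l).PosSemidef) :
    (Matrix.blockDiagonal M).PosSemidef := by
  choose B hB using fun l => (show ∃ B : Matrix κ κ ℂ, M l = Bᴴ * B by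
    open scoped MatrixOrder in
    exact CStarAlgebra.nonneg_iff_eq_star_mul_self.mp (hM l).nonneg)
  have hMB : Matrix.blockDiagonal M = (Matrix.blockDiagonal B)ᴴ * Matrix.blockDiagonal B := by
    rw [Matrix.blockDiagonal_conjTranspose, ← Matrix.blockDiagonal_mul, ← funext hB]
  rw [hMB]
  exact Matrix.posSemidef_conjTranspose_mul_self _

section PsdFactorization

variable {α β : Type} [Fintype α] [Fintype β]

lemma HasPsdFac.of_nonneg {n' : ℕ} {P : Matrix α (Fin n') ℝ} (hP : ∀ i j, 0 ≤ P i j) :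
    HasPsdFac P n' := by
  refine ⟨fun i => Matrix.diagonal fun j => (P i j : ℂ),
    fun j => Matrix.diagonal (Pi.single j 1), fun i => ?_, fun j => ?_, fun i j => ?_⟩
  · exact Matrix.PosSemidef.diagonal fun j => Complex.zero_le_real.mpr (hP i j)
  · exact Matrix.PosSemidef.diagonal (Pi.single_nonneg.mpr zero_le_one)
  · simp [Matrix.diagonal_mul_diagonal, Matrix.trace_diagonal, Pi.single_apply]

lemma HasPsdFac.mono {P : Matrix α β ℝ} {r s : ℕ} (hf : HasPsdFac P r) (hrs : r ≤ s) :
    HasPsdFac P s := by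
  obtain ⟨C, D, hC, hD, hCD⟩ := hf
  let E : Matrix (Fin s) (Fin r) ℂ := (1 : Matrix (Fin s) (Fin s) ℂ).submatrix id (Fin.castLE hrs)
  have hE : Eᴴ * E = 1 := by
    rw [Matrix.conjTranspose_submatrix, Matrix.conjTranspose_one,
      ← Matrix.submatrix_mul _ _ _ _ _ Function.bijective_id, Matrix.one_mul,
      Matrix.submatrix_one _ (Fin.castLE_injective hrs)]
  exact ⟨fun i => E * C i * Eᴴ, fun j => E * D j * Eᴴ,
    fun i => (hC i).mul_mul_conjTranspose_same E, fun j => (hD j).mul_mul_conjTranspose_same E,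
    fun i j => by rw [Matrix.trace_mul_conj_of_conjTranspose_mul_self_eq_one hE, hCD]⟩

lemma HasPsdFac.smul {P : Matrix α β ℝ} {r : ℕ} (hf : HasPsdFac P r) {c : ℝ} (hc : 0 ≤ c) :
    HasPsdFac (c • P) r := by
  obtain ⟨C, D, hC, hD, hCD⟩ := hf
  refine ⟨C, fun j => (c : ℂ) • D j, hC, fun j => (hD j).smul (Complex.zero_le_real.mpr hc),
    fun i j => ?_⟩
  rw [Matrix.mul_smul, Matrix.trace_smul, ← hCD, smul_eq_mul]
  simp

lemma hasPsdFac_of_prank_le {n' : ℕ} {P : Matrix α (Fin n') ℝ} (hP : ∀ i j, 0 ≤ P i j) {r : ℕ}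
    (hr : prank P ≤ r) : HasPsdFac P r :=
  (Nat.sInf_mem (s := {r | HasPsdFac P r}) ⟨n', .of_nonneg hP⟩).mono hr

lemma HasBlockPsdFac.hasPsdFac {k r : ℕ} {P : Matrix α β ℝ} (h : HasBlockPsdFac k P r) :
    HasPsdFac P (k * r) := by
  obtain ⟨C, D, hC, hD, hCD⟩ := h
  let e : Fin (k * r) ≃ Fin k × Fin r := finProdFinEquiv.symm
  refine ⟨fun i => (Matrix.blockDiagonal (C i)).submatrix e e,
    fun j => (Matrix.blockDiagonal (D j)).submatrix e e,
    fun i => (Matrix.PosSemidef.blockDiagonal (hC i)).submatrix e,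
    fun j => (Matrix.PosSemidef.blockDiagonal (hD j)).submatrix e, fun i j => ?_⟩
  rw [Matrix.submatrix_mul_equiv, Matrix.trace_submatrix_equiv, ← Matrix.blockDiagonal_mul,
    Matrix.trace_blockDiagonal, hCD]

lemma prank_le_mul_kprank {k : ℕ} {P : Matrix α β ℝ} (h : ∃ r, HasBlockPsdFac k P r) :
    prank P ≤ k * kprank k P :=
  Nat.sInf_le (Nat.sInf_mem (s := {r | HasBlockPsdFac k P r}) h).hasPsdFac

lemma hasBlockPsdFac_blockDiag {m k : ℕ} {Q : Fin m → Matrix α β ℝ}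
    (hQ : ∀ a, HasPsdFac (Q a) k) :
    HasBlockPsdFac k
      (Matrix.of fun (p : Fin m × α) (q : Fin m × β) => if p.1 = q.1 then Q p.1 p.2 q.2 else 0)
      m := by
  choose C D hC hD hCD using hQ
  have slot : ∀ {M : Matrix (Fin k) (Fin k) ℂ} (a l : Fin m), M.PosSemidef →
      (if a = l then M else 0).PosSemidef := fun a l hM => by
    split_ifs
    exacts [hM, Matrix.PosSemidef.zero]
  refine ⟨fun p l => if p.1 = l then C p.1 p.2 else 0, fun q l => if q.1 = l then D q.1 q.2 else 0,
    fun p l => slot _ _ (hC _ _), fun q l => slot _ _ (hD _ _), ?_⟩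
  rintro ⟨a, i⟩ ⟨b, j⟩
  by_cases hab : a = b
  · subst hab
    simp [ite_mul, mul_ite, apply_ite Matrix.trace, hCD]
  · simp [ite_mul, mul_ite, apply_ite Matrix.trace, hab]

end PsdFactorization

theorem stmt5_general {n n' m k : ℕ} (hk : 1 ≤ k)
    (Q : Fin m → Matrix (Fin n) (Fin n') ℝ) (hQ : ∀ a i j, 0 ≤ Q a i j)
    (hQrank : ∀ a, prank (Q a) ≤ k)
    (P : Matrix (Fin m × Fin n) (Fin m × Fin n') ℝ)
    (hP : ∀ a i b j, P (a, i) (b, j) = if a = b then (1 / (m : ℝ)) * Q a i j else 0) :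
    kprank k P ≤ m ∧ (k * m ≤ prank P → kprank k P = m) := by
  have hfac : ∀ a, HasPsdFac ((1 / (m : ℝ)) • Q a) k := fun a =>
    (hasPsdFac_of_prank_le (hQ a) (hQrank a)).smul (by positivity)
  have hblock : HasBlockPsdFac k P m := by
    convert hasBlockPsdFac_blockDiag hfac
    ext ⟨a, i⟩ ⟨b, j⟩
    simp only [hP, Matrix.of_apply, Matrix.smul_apply, smul_eq_mul]
  have hupper : kprank k P ≤ m := Nat.sInf_le hblock
  refine ⟨hupper, fun hkm => le_antisymm hupper ?_⟩
  exact Nat.le_of_mul_le_mul_left (hkm.trans (prank_le_mul_kprank ⟨m, hblock⟩)) hk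

theorem stmt5 {n n' m k : ℕ} (hk : 1 ≤ k) (hm : 1 ≤ m)
    (Q : Fin m → Matrix (Fin n) (Fin n') ℝ) (hQ : ∀ a i j, 0 ≤ Q a i j)
    (hQrank : ∀ a, prank (Q a) ≤ k)
    (P : Matrix (Fin m × Fin n) (Fin m × Fin n') ℝ)
    (hP : ∀ a i b j, P (a, i) (b, j) = if a = b then (1 / (m : ℝ)) * Q a i j else 0) :
    kprank k P ≤ m ∧ (k * m ≤ prank P → kprank k P = m) :=
  stmt5_general hk Q hQ hQrank P hP
end

section
/- Let n ≥ 64 and let Q ∈ ℝ_{≥0}^{n×n} be a nonnegative matrix with Q(i,i) = 0 for all i, Q(i,j) > 0 for all i ≠ j, and nonnegative rank rank₊(Q) ≥ 2√n − 2. If Q⊗Q = Σ_{k=1}^{r} P_k, where each P_k ∈ ℝ_{≥0}^{n²×n²} is a nonnegative matrix with PSD-rank prank(P_k) ≤ 2, then r ≥ log₂ n. -/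
open Matrix BigOperators Kronecker
open scoped ComplexOrder

/-!
Factor each `P k` as `tr (C k x * D k y)` with `2 × 2` PSD matrices. Since `Q` vanishes on the
diagonal, so do the blocks `P k (i, ·) (i, ·)`, which forces `C k (i, a) * D k (i, b) = 0`; in
dimension two this puts one of the families `C k (i, ·)`, `D k (i, ·)` on a single ray
`ℝ≥0 • v vᴴ`. If for all `i ≠ j` some `k` has neither `C k (i, ·)` nor `D k (j, ·)` on a ray,
then `i ↦ {k | C k (i, ·) lies on a ray}` is injective and `n ≤ 2 ^ r`. Otherwise, for some
`i ≠ j` every block `P k (i, ·) (j, ·)` is a nonnegative rank-one matrix; these blocks sum to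
`Q i j • Q`, so `r ≥ rank₊ Q ≥ 2 √n - 2 ≥ log₂ n`.
-/

open scoped MatrixOrder in
theorem Matrix.PosSemidef.mul_eq_zero_of_trace_mul_eq_zero {𝕜 s : Type*} [RCLike 𝕜] [Fintype s]
    {C D : Matrix s s 𝕜} (hC : C.PosSemidef) (hD : D.PosSemidef)
    (h : (C * D).trace = 0) : C * D = 0 := by
  classical
  obtain ⟨A, rfl⟩ := CStarAlgebra.nonneg_iff_eq_star_mul_self.mp hC.nonneg
  obtain ⟨B, rfl⟩ := CStarAlgebra.nonneg_iff_eq_star_mul_self.mp hD.nonneg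
  simp only [star_eq_conjTranspose] at h ⊢
  have hAB : A * Bᴴ = 0 := by
    rw [← trace_conjTranspose_mul_self_eq_zero_iff, ← h, conjTranspose_mul,
      conjTranspose_conjTranspose, Matrix.mul_assoc, trace_mul_comm]
    simp only [Matrix.mul_assoc]
  calc Aᴴ * A * (Bᴴ * B) = Aᴴ * (A * Bᴴ) * B := by simp only [Matrix.mul_assoc]
    _ = 0 := by rw [hAB, Matrix.mul_zero, Matrix.zero_mul]

lemma Complex.ofReal_re_eq_of_nonneg {z : ℂ} (hz : 0 ≤ z) : (z.re : ℂ) = z :=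
  (eq_re_of_ofReal_le (r := 0) (by simpa using hz)).symm

def OnRankOneRay {ι s : Type*} (F : ι → Matrix s s ℂ) : Prop :=
  ∃ v : s → ℂ, ∀ a, ∃ c : ℝ, 0 ≤ c ∧ F a = (c : ℂ) • vecMulVec v (star v)

open ComplexConjugate in
/-- The vector `![-conj (w 1), conj (w 0)]` spans the orthogonal complement of `w`, and
the scalar turns out to be `tr E / ‖w‖²`. -/
theorem Matrix.PosSemidef.eq_smul_vecMulVec_of_mulVec_eq_zero {E : Matrix (Fin 2) (Fin 2) ℂ}
    (hE : E.PosSemidef) {w : Fin 2 → ℂ} (hw : w ≠ 0) (hEw : E *ᵥ w = 0) :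
    ∃ c : ℝ, 0 ≤ c ∧
      E = (c : ℂ) • vecMulVec ![-conj (w 1), conj (w 0)] (star ![-conj (w 1), conj (w 0)]) := by
  set N : ℝ := Complex.normSq (w 0) + Complex.normSq (w 1)
  have hNpos : 0 < N := by
    have : w 0 ≠ 0 ∨ w 1 ≠ 0 := by
      by_contra! h
      exact hw (funext fun i => by fin_cases i <;> simp [h])
    rcases this with h | h
    · exact add_pos_of_pos_of_nonneg (Complex.normSq_pos.mpr h) (Complex.normSq_nonneg _)
    · exact add_pos_of_nonneg_of_pos (Complex.normSq_nonneg _) (Complex.normSq_pos.mpr h)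
  have hN : (N : ℂ) ≠ 0 := Complex.ofReal_ne_zero.mpr hNpos.ne'
  have hNc : (N : ℂ) = w 0 * conj (w 0) + w 1 * conj (w 1) := by
    simp [N, Complex.mul_conj]
  have hT : (E.trace.re : ℂ) = E.trace := Complex.ofReal_re_eq_of_nonneg hE.trace_nonneg
  refine ⟨E.trace.re / N, div_nonneg (Complex.nonneg_iff.mp hE.trace_nonneg).1 hNpos.le, ?_⟩
  have herm (i j : Fin 2) : conj (E j i) = E i j := hE.1.apply i j
  have eq0 : E 0 0 * w 0 + E 0 1 * w 1 = 0 := by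
    simpa [mulVec, dotProduct, Fin.sum_univ_two] using congrFun hEw 0
  have eq1 : E 1 0 * w 0 + E 1 1 * w 1 = 0 := by
    simpa [mulVec, dotProduct, Fin.sum_univ_two] using congrFun hEw 1
  have eq0c : E 0 0 * conj (w 0) + E 1 0 * conj (w 1) = 0 := by
    simpa [herm] using congrArg conj eq0
  have eq1c : E 0 1 * conj (w 0) + E 1 1 * conj (w 1) = 0 := by
    simpa [herm] using congrArg conj eq1
  ext i j
  rw [smul_apply, vecMulVec_apply, Complex.ofReal_div, hT, smul_eq_mul, div_mul_eq_mul_div,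
    eq_div_iff hN, hNc, Matrix.trace_fin_two]
  fin_cases i <;> fin_cases j <;>
    simp only [Fin.zero_eta, Fin.mk_one, Fin.isValue, cons_val_zero, cons_val_one, cons_val_fin_one,
      Pi.star_apply, RCLike.star_def, map_neg, Complex.conj_conj]
  · linear_combination conj (w 0) * eq0 - w 1 * eq1c
  · linear_combination w 0 * eq1c + conj (w 1) * eq0
  · linear_combination conj (w 0) * eq1 + w 1 * eq0c
  · linear_combination w 1 * eq1c - conj (w 0) * eq0

lemma onRankOneRay_of_mulVec_eq_zero {m : ℕ} (hm : m ≤ 2) {ι : Type*}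
    {F : ι → Matrix (Fin m) (Fin m) ℂ} (hF : ∀ a, (F a).PosSemidef) {w : Fin m → ℂ}
    (hw : w ≠ 0) (hFw : ∀ a, F a *ᵥ w = 0) : OnRankOneRay F := by
  interval_cases m
  · exact absurd (Subsingleton.elim w 0) hw
  · have hw0 : w 0 ≠ 0 := fun h => hw (funext fun i => by fin_cases i; exact h)
    refine ⟨0, fun a => ⟨0, le_rfl, ?_⟩⟩
    ext i j
    fin_cases i; fin_cases j
    simpa [mulVec, dotProduct, hw0] using congrFun (hFw a) 0
  · exact ⟨_, fun a => (hF a).eq_smul_vecMulVec_of_mulVec_eq_zero hw (hFw a)⟩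

lemma onRankOneRay_or_onRankOneRay_of_mul_eq_zero {m : ℕ} (hm : m ≤ 2) {ι κ : Type*}
    {C : ι → Matrix (Fin m) (Fin m) ℂ} {D : κ → Matrix (Fin m) (Fin m) ℂ}
    (hC : ∀ a, (C a).PosSemidef) (hCD : ∀ a b, C a * D b = 0) :
    OnRankOneRay C ∨ OnRankOneRay D := by
  by_cases hD : ∀ b, D b = 0
  · exact Or.inr ⟨0, fun b => ⟨0, le_rfl, by simp [hD b]⟩⟩
  obtain ⟨b, hb⟩ := not_forall.mp hD
  obtain ⟨q, hq⟩ : ∃ q, D b *ᵥ Pi.single q 1 ≠ 0 := by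
    by_contra! h
    exact hb (ext fun i q => by simpa using congrFun (h q) i)
  exact Or.inl <| onRankOneRay_of_mulVec_eq_zero hm hC hq fun a => by
    rw [mulVec_mulVec, hCD, zero_mulVec]

lemma OnRankOneRay.exists_trace_mul_eq {ι κ s : Type*} [Fintype s]
    {F : ι → Matrix s s ℂ} (hF : OnRankOneRay F) {G : κ → Matrix s s ℂ}
    (hG : ∀ b, (G b).PosSemidef) :
    ∃ (f : ι → ℝ) (g : κ → ℝ), (∀ a, 0 ≤ f a) ∧ (∀ b, 0 ≤ g b) ∧
      ∀ a b, (F a * G b).trace = ((f a * g b : ℝ) : ℂ) := by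
  obtain ⟨v, hv⟩ := hF
  choose c hc hFc using hv
  refine ⟨c, fun b => (star v ⬝ᵥ G b *ᵥ v).re, hc, fun b => (hG b).re_dotProduct_nonneg v,
    fun a b => ?_⟩
  rw [Complex.ofReal_mul, Complex.ofReal_re_eq_of_nonneg ((hG b).dotProduct_mulVec_nonneg v),
    hFc a, smul_mul, trace_smul, trace_mul_comm, mul_vecMulVec, trace_vecMulVec, dotProduct_comm,
    smul_eq_mul]

lemma exists_trace_mul_eq_of_onRankOneRay_or {ι κ s : Type*} [Fintype s]
    {C : ι → Matrix s s ℂ} {D : κ → Matrix s s ℂ} (hC : ∀ a, (C a).PosSemidef)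
    (hD : ∀ b, (D b).PosSemidef) (h : OnRankOneRay C ∨ OnRankOneRay D) :
    ∃ (f : ι → ℝ) (g : κ → ℝ), (∀ a, 0 ≤ f a) ∧ (∀ b, 0 ≤ g b) ∧
      ∀ a b, (C a * D b).trace = ((f a * g b : ℝ) : ℂ) := by
  rcases h with hC' | hD'
  · exact hC'.exists_trace_mul_eq hD
  · obtain ⟨g, f, hg, hf, hgf⟩ := hD'.exists_trace_mul_eq hC
    exact ⟨f, g, hf, hg, fun a b => by rw [trace_mul_comm, hgf, mul_comm]⟩

lemma hasPsdFac_card {α β : Type} [Fintype α] [Fintype β] {P : Matrix α β ℝ}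
    (hP : ∀ i j, 0 ≤ P i j) : HasPsdFac P (Fintype.card β) := by
  let e := Fintype.equivFin β
  refine ⟨fun i => diagonal fun l => (P i (e.symm l) : ℂ),
    fun j => diagonal fun l => if l = e j then 1 else 0, fun i => ?_, fun j => ?_, fun i j => ?_⟩
  · exact posSemidef_diagonal_iff.mpr fun l => Complex.zero_le_real.mpr (hP i _)
  · refine posSemidef_diagonal_iff.mpr fun l => ?_
    split_ifs <;> norm_num
  · simp [diagonal_mul_diagonal, trace_diagonal]

lemma hasPsdFac_prank {α β : Type} [Fintype α] [Fintype β] {P : Matrix α β ℝ}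
    (hP : ∀ i j, 0 ≤ P i j) : HasPsdFac P (prank P) :=
  Nat.sInf_mem (s := {r | HasPsdFac P r}) ⟨_, hasPsdFac_card hP⟩

lemma nnRank_le_of_smul_eq_sum {α β : Type} [Fintype α] [Fintype β] {M : Matrix α β ℝ}
    {c : ℝ} (hc : 0 < c) {r : ℕ} (u : Fin r → α → ℝ) (v : Fin r → β → ℝ)
    (hu : ∀ l i, 0 ≤ u l i) (hv : ∀ l j, 0 ≤ v l j)
    (h : ∀ i j, c * M i j = ∑ l, u l i * v l j) : nnRank M ≤ r := by
  refine Nat.sInf_le ⟨fun l i => u l i / c, v, fun l i => div_nonneg (hu l i) hc.le, hv,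
    fun i j => ?_⟩
  simp_rw [div_mul_eq_mul_div, ← Finset.sum_div, ← h, mul_div_cancel_left₀ _ hc.ne']

lemma card_le_two_pow_of_separating {ι : Type*} [Fintype ι] {r : ℕ} (L L' : Fin r → ι → Prop)
    (hL : ∀ k i, L k i ∨ L' k i) (hsep : ∀ i j, i ≠ j → ∃ k, ¬ L k i ∧ ¬ L' k j) :
    Fintype.card ι ≤ 2 ^ r := by
  have hinj : Function.Injective fun i k => L k i := by
    intro i j hij
    by_contra hne
    obtain ⟨k, hLi, hL'j⟩ := hsep i j hne
    rw [show L k i = L k j from congrFun hij k] at hLi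
    exact hLi ((hL k j).resolve_right hL'j)
  simpa using Fintype.card_le_of_injective _ hinj

lemma logb_two_le_of_le_two_pow {n r : ℕ} (h : n ≤ 2 ^ r) : Real.logb 2 n ≤ r := by
  rcases n.eq_zero_or_pos with rfl | hn
  · simp
  calc Real.logb 2 n ≤ Real.logb 2 (2 ^ r) :=
        Real.logb_le_logb_of_le (by norm_num) (by exact_mod_cast hn) (by exact_mod_cast h)
    _ = r := by rw [Real.logb_pow, Real.logb_self_eq_one (by norm_num), mul_one]

lemma logb_two_le_two_mul_sqrt_sub_two {x : ℝ} (hx : 64 ≤ x) : Real.logb 2 x ≤ 2 * √x - 2 := by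
  have hs : 8 ≤ √x := (Real.le_sqrt (by norm_num) (by linarith)).mpr (by linarith)
  have hlog : Real.log x = 2 * (Real.log (√x / 8) + 3 * Real.log 2) := by
    rw [Real.log_div (by positivity) (by norm_num), Real.log_sqrt (by linarith),
      show (8 : ℝ) = 2 ^ 3 by norm_num, Real.log_pow]
    push_cast; ring
  have hle : Real.log (√x / 8) ≤ √x / 8 - 1 := Real.log_le_sub_one_of_pos (by positivity)
  have hlog2 : 1 / 2 < Real.log 2 := by linarith [Real.log_two_gt_d9]
  rw [← Real.log_div_log, div_le_iff₀ (by linarith), hlog]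
  nlinarith [mul_le_mul_of_nonneg_left hs (by linarith : (0 : ℝ) ≤ Real.log 2 - 1 / 2)]

theorem stmt6 {n : ℕ} (hn : 64 ≤ n)
    (Q : Matrix (Fin n) (Fin n) ℝ)
    (hdiag : ∀ i, Q i i = 0) (hoff : ∀ i j, i ≠ j → 0 < Q i j)
    (hnnr : 2 * Real.sqrt n - 2 ≤ (nnRank Q : ℝ))
    (r : ℕ) (P : Fin r → Matrix (Fin n × Fin n) (Fin n × Fin n) ℝ)
    (hPnn : ∀ k x y, 0 ≤ P k x y) (hPrank : ∀ k, prank (P k) ≤ 2)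
    (hsum : Q ⊗ₖ Q = ∑ k, P k) :
    Real.logb 2 n ≤ (r : ℝ) := by
  have hQQ (i a j b : Fin n) : Q i j * Q a b = ∑ k, P k (i, a) (j, b) := by
    simpa [Matrix.sum_apply] using congrFun (congrFun hsum (i, a)) (j, b)
  choose m hm C D hC hD htr using fun k =>
    (⟨prank (P k), hPrank k, hasPsdFac_prank (hPnn k)⟩ : ∃ m, m ≤ 2 ∧ HasPsdFac (P k) m)
  have hCD (k : Fin r) (i a b : Fin n) : C k (i, a) * D k (i, b) = 0 := by
    refine (hC k _).mul_eq_zero_of_trace_mul_eq_zero (hD k _) ?_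
    have hPk := (Finset.sum_eq_zero_iff_of_nonneg fun k _ => hPnn k (i, a) (i, b)).mp
      (by rw [← hQQ, hdiag, zero_mul]) k (Finset.mem_univ k)
    rw [← htr, hPk, Complex.ofReal_zero]
  have hray (k : Fin r) (i : Fin n) :
      OnRankOneRay (fun a => C k (i, a)) ∨ OnRankOneRay (fun b => D k (i, b)) :=
    onRankOneRay_or_onRankOneRay_of_mul_eq_zero (hm k) (fun a => hC k _) (hCD k i)
  by_cases hsep : ∀ i j, i ≠ j →
      ∃ k, ¬ OnRankOneRay (fun a => C k (i, a)) ∧ ¬ OnRankOneRay (fun b => D k (j, b))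
  · exact logb_two_le_of_le_two_pow (by simpa using card_le_two_pow_of_separating _ _ hray hsep)
  obtain ⟨i, j, hij, hij'⟩ : ∃ i j, i ≠ j ∧ ∀ k,
      OnRankOneRay (fun a => C k (i, a)) ∨ OnRankOneRay (fun b => D k (j, b)) := by
    simpa [or_iff_not_imp_left] using hsep
  choose u v hu hv huv using fun k =>
    exists_trace_mul_eq_of_onRankOneRay_or (fun a => hC k (i, a)) (fun b => hD k (j, b)) (hij' k)
  have hrank : nnRank Q ≤ r := nnRank_le_of_smul_eq_sum (hoff i j hij) u v hu hv fun a b => by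
    rw [hQQ]
    exact Finset.sum_congr rfl fun k _ => by exact_mod_cast (htr k _ _).trans (huv k a b)
  calc Real.logb 2 n ≤ 2 * √n - 2 := logb_two_le_two_mul_sqrt_sub_two (by exact_mod_cast hn)
    _ ≤ nnRank Q := hnnr
    _ ≤ r := by exact_mod_cast hrank
end
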